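/- arXiv:1310.4292 — 2 statements merged into one kernel-verified Lean document; each statement's English description precedes it below -/
import Mathlib

section
/- In logarithmic coordinates, the map Φ(ξ,ψ,η) = (i·cos^{1/2}ψ · e^{(ξ + i(ψ - 3η))/2}, -sinψ · e^ξ) from ℝ × (-π/2, π/2) × ℝ to ℂ × ℝ has Jacobian determinant J_Φ(ξ,ψ,η) = -(3/4)·e^{2ξ} (with respect to real coordinates (x,y,t) where z = x+iy). -/
noncomputable section

open Real

/-- Logarithmic coordinates map Φ(ξ,ψ,η) = (i·cos^{1/2}ψ·e^{(ξ+i(ψ-3η))/2}, -e^ξ·sinψ). -/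
def Phi (ξ ψ η : ℝ) : ℂ × ℝ :=
  (Complex.I * (Real.sqrt (Real.cos ψ) : ℂ) *
      Complex.exp ((↑ξ + Complex.I * (↑ψ - 3 * ↑η)) / 2),
    -Real.exp ξ * Real.sin ψ)

/-- x-component of Φ. -/
def Phix (ξ ψ η : ℝ) : ℝ := (Phi ξ ψ η).1.re
/-- y-component of Φ. -/
def Phiy (ξ ψ η : ℝ) : ℝ := (Phi ξ ψ η).1.im
/-- t-component of Φ. -/
def Phit (ξ ψ η : ℝ) : ℝ := (Phi ξ ψ η).2

lemma zeq (ξ ψ η : ℝ) : ((↑ξ + Complex.I * (↑ψ - 3 * ↑η)) / 2 : ℂ)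
    = Complex.mk (ξ/2) ((ψ - 3*η)/2) := by
  apply Complex.ext <;> simp [Complex.div_re, Complex.div_im, Complex.normSq]

lemma phix_eq (ξ ψ η : ℝ) :
    Phix ξ ψ η = -(Real.sqrt (Real.cos ψ) * Real.exp (ξ/2) * Real.sin ((ψ-3*η)/2)) := by
  simp [Phix, Phi, zeq, Complex.exp_re, Complex.exp_im, Complex.mul_re, Complex.mul_im]
  ring

lemma phiy_eq (ξ ψ η : ℝ) :
    Phiy ξ ψ η = Real.sqrt (Real.cos ψ) * Real.exp (ξ/2) * Real.cos ((ψ-3*η)/2) := by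
  simp [Phiy, Phi, zeq, Complex.exp_re, Complex.exp_im, Complex.mul_re, Complex.mul_im]
  ring

lemma phit_eq (ξ ψ η : ℝ) : Phit ξ ψ η = -Real.exp ξ * Real.sin ψ := rfl

/-- The Jacobian determinant of Φ equals -(3/4)e^{2ξ}. -/
theorem jacobian_Phi (ξ ψ η : ℝ) (hψ : ψ ∈ Set.Ioo (-(π / 2)) (π / 2)) :
    Matrix.det
      !![deriv (fun s => Phix s ψ η) ξ, deriv (fun s => Phix ξ s η) ψ, deriv (fun s => Phix ξ ψ s) η;
         deriv (fun s => Phiy s ψ η) ξ, deriv (fun s => Phiy ξ s η) ψ, deriv (fun s => Phiy ξ ψ s) η;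
         deriv (fun s => Phit s ψ η) ξ, deriv (fun s => Phit ξ s η) ψ, deriv (fun s => Phit ξ ψ s) η]
      = -(3 / 4) * Real.exp (2 * ξ) := by
  have hC : 0 < Real.cos ψ := Real.cos_pos_of_mem_Ioo (by simpa using hψ)
  set A := Real.sqrt (Real.cos ψ) with hA
  set E := Real.exp (ξ/2) with hE
  set θ := (ψ - 3*η)/2 with hθ
  have hAne : Real.cos ψ ≠ 0 := hC.ne'
  -- inner derivative lemmas
  have hexp : HasDerivAt (fun s : ℝ => Real.exp (s/2)) (E * (1/2)) ξ :=
    by have := (Real.hasDerivAt_exp (ξ/2)).comp ξ ((hasDerivAt_id ξ).div_const 2); exact this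
  set d : ℝ := 1/(2*A) * (-Real.sin ψ) with hd
  have hsqrt : HasDerivAt (fun s : ℝ => Real.sqrt (Real.cos s)) d ψ :=
    (Real.hasDerivAt_sqrt hAne).comp ψ (Real.hasDerivAt_cos ψ)
  have hlinψ : HasDerivAt (fun s : ℝ => (s - 3*η)/2) ((1:ℝ)/2) ψ := by
    simpa using ((hasDerivAt_id ψ).sub_const (3*η)).div_const 2
  have hlinη : HasDerivAt (fun s : ℝ => (ψ - 3*s)/2) (-(3:ℝ)/2) η := by
    have := ((hasDerivAt_const η ψ).sub ((hasDerivAt_id η).const_mul 3)).div_const 2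
    simpa using this
  have hsinψ : HasDerivAt (fun s : ℝ => Real.sin ((s - 3*η)/2)) (Real.cos θ * (1/2)) ψ :=
    (Real.hasDerivAt_sin _).comp ψ hlinψ
  have hcosψ : HasDerivAt (fun s : ℝ => Real.cos ((s - 3*η)/2)) (-Real.sin θ * (1/2)) ψ :=
    (Real.hasDerivAt_cos _).comp ψ hlinψ
  have hsinη : HasDerivAt (fun s : ℝ => Real.sin ((ψ - 3*s)/2)) (Real.cos θ * (-3/2)) η :=
    (Real.hasDerivAt_sin _).comp η hlinη
  have hcosη : HasDerivAt (fun s : ℝ => Real.cos ((ψ - 3*s)/2)) (-Real.sin θ * (-3/2)) η :=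
    (Real.hasDerivAt_cos _).comp η hlinη
  -- the nine entries
  have e11 : deriv (fun s => Phix s ψ η) ξ = -(A * (E * (1/2)) * Real.sin θ) := by
    simp only [phix_eq]
    exact (((hexp.const_mul A).mul_const (Real.sin θ)).neg).deriv
  have e21 : deriv (fun s => Phiy s ψ η) ξ = A * (E * (1/2)) * Real.cos θ := by
    simp only [phiy_eq]
    exact ((hexp.const_mul A).mul_const (Real.cos θ)).deriv
  have e12 : deriv (fun s => Phix ξ s η) ψ
      = -((d * E) * Real.sin θ + (A * E) * (Real.cos θ * (1/2))) := by
    simp only [phix_eq]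
    exact (((hsqrt.mul_const E).mul hsinψ).neg).deriv
  have e22 : deriv (fun s => Phiy ξ s η) ψ
      = (d * E) * Real.cos θ + (A * E) * (-Real.sin θ * (1/2)) := by
    simp only [phiy_eq]
    exact ((hsqrt.mul_const E).mul hcosψ).deriv
  have e13 : deriv (fun s => Phix ξ ψ s) η = -((A * E) * (Real.cos θ * (-3/2))) := by
    simp only [phix_eq]
    exact ((hsinη.const_mul (A * E)).neg).deriv
  have e23 : deriv (fun s => Phiy ξ ψ s) η = (A * E) * (-Real.sin θ * (-3/2)) := by
    simp only [phiy_eq]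
    exact (hcosη.const_mul (A * E)).deriv
  have e31 : deriv (fun s => Phit s ψ η) ξ = -Real.exp ξ * Real.sin ψ := by
    simp only [phit_eq]
    exact (((Real.hasDerivAt_exp ξ).neg).mul_const (Real.sin ψ)).deriv
  have e32 : deriv (fun s => Phit ξ s η) ψ = -Real.exp ξ * Real.cos ψ := by
    simp only [phit_eq]
    have := (Real.hasDerivAt_sin ψ).const_mul (-Real.exp ξ)
    simpa using this.deriv
  have e33 : deriv (fun s => Phit ξ ψ s) η = 0 := by
    simp [phit_eq]
  rw [e11, e12, e13, e21, e22, e23, e31, e32, e33, Matrix.det_fin_three]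
  simp only [Matrix.cons_val_zero, Matrix.cons_val_one, Matrix.head_cons, Matrix.cons_val_two,
    Matrix.tail_cons, Matrix.head_fin_const, Matrix.cons_val', Matrix.empty_val',
    Matrix.cons_val_fin_one, Matrix.of_apply]
  have hA2 : A * A = Real.cos ψ := Real.mul_self_sqrt hC.le
  have hEE : E * E = Real.exp ξ := by rw [hE, ← Real.exp_add]; norm_num
  have hE2 : Real.exp ξ * Real.exp ξ = Real.exp (2*ξ) := by rw [← Real.exp_add]; ring_nf
  have hsc : Real.sin θ ^ 2 + Real.cos θ ^ 2 = 1 := Real.sin_sq_add_cos_sq θ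
  have hSC : Real.sin ψ ^ 2 + Real.cos ψ ^ 2 = 1 := Real.sin_sq_add_cos_sq ψ
  have hAne' : A ≠ 0 := by positivity
  have hd2 : 2*A*d = -Real.sin ψ := by rw [hd]; field_simp
  linear_combination (3/4)*E*E*Real.exp ξ*Real.sin ψ * hd2
    - (3/4)*E*E*Real.exp ξ*Real.cos ψ * hA2
    + (3/2)*A*E*E*Real.exp ξ*(Real.sin ψ*d - A*Real.cos ψ/2) * hsc
    - (3/4)*E*E*Real.exp ξ * hSC - (3/4)*Real.exp ξ * hEE - (3/4)*hE2
end
end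

section
/- For the cone surface patch σ_ψ(ξ,η) = Φ(ξ,ψ,η) with ψ fixed, the horizontal normal is N^h = -(3/2)e^{3ξ/2}cos^{1/2}ψ·(cos(3(η-ψ)/2)·X - sin(3(η-ψ)/2)·Y), and consequently its norm is ‖N^h_{σ_ψ}(ξ,η)‖ = (3/2)·e^{3ξ/2}·cos^{1/2}ψ. -/
noncomputable section

open Real

/-- ξ-partial derivative of a component along the cone patch σ_ψ. -/
def pXi (f : ℝ → ℝ → ℝ → ℝ) (ξ ψ η : ℝ) : ℝ := deriv (fun s => f s ψ η) ξ
/-- η-partial derivative of a component along the cone patch σ_ψ. -/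
def pEta (f : ℝ → ℝ → ℝ → ℝ) (ξ ψ η : ℝ) : ℝ := deriv (fun s => f ξ ψ s) η

/-- X-component of the horizontal normal of the cone patch σ_ψ(ξ,η) = Φ(ξ,ψ,η). -/
def Nh1 (ξ ψ η : ℝ) : ℝ :=
  (pXi Phiy ξ ψ η * pEta Phit ξ ψ η - pEta Phiy ξ ψ η * pXi Phit ξ ψ η)
    + 2 * Phiy ξ ψ η *
      (pXi Phix ξ ψ η * pEta Phiy ξ ψ η - pEta Phix ξ ψ η * pXi Phiy ξ ψ η)

/-- Y-component of the horizontal normal of the cone patch σ_ψ(ξ,η) = Φ(ξ,ψ,η). -/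
def Nh2 (ξ ψ η : ℝ) : ℝ :=
  (pXi Phit ξ ψ η * pEta Phix ξ ψ η - pEta Phit ξ ψ η * pXi Phix ξ ψ η)
    - 2 * Phix ξ ψ η *
      (pXi Phix ξ ψ η * pEta Phiy ξ ψ η - pEta Phix ξ ψ η * pXi Phiy ξ ψ η)


lemma hz (ξ ψ η : ℝ) : (↑ξ + Complex.I * (↑ψ - 3 * ↑η)) / 2
    = (↑(ξ/2) : ℂ) + ↑((ψ - 3*η)/2) * Complex.I := by
  push_cast; ring

lemma hd_half (ξ : ℝ) : HasDerivAt (fun s : ℝ => s / 2) (1/2) ξ :=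
  (hasDerivAt_id ξ).div_const 2

lemma hd_eta (η ψ : ℝ) : HasDerivAt (fun s : ℝ => (ψ - 3*s)/2) (-(3/2)) η := by
  have := ((hasDerivAt_const η ψ).sub ((hasDerivAt_id η).const_mul 3)).div_const 2
  norm_num at this ⊢; exact this

lemma pXi_phix (ξ ψ η : ℝ) :
    pXi Phix ξ ψ η = -(Real.sqrt (Real.cos ψ) * (Real.exp (ξ/2)/2) * Real.sin ((ψ-3*η)/2)) := by
  have h : (fun s => Phix s ψ η)
      = fun s => -(Real.sqrt (Real.cos ψ) * Real.exp (s/2) * Real.sin ((ψ-3*η)/2)) :=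
    funext fun s => phix_eq s ψ η
  have hd : HasDerivAt (fun s => -(Real.sqrt (Real.cos ψ) * Real.exp (s/2) * Real.sin ((ψ-3*η)/2)))
      (-(Real.sqrt (Real.cos ψ) * (Real.exp (ξ/2) * (1/2)) * Real.sin ((ψ-3*η)/2))) ξ := by
    have := (((hd_half ξ).exp.const_mul (Real.sqrt (Real.cos ψ))).mul_const
      (Real.sin ((ψ-3*η)/2))).neg
    simpa [mul_comm, mul_assoc, mul_left_comm, Pi.neg_def] using this
  rw [pXi, h, hd.deriv]; ring

lemma pXi_phiy (ξ ψ η : ℝ) :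
    pXi Phiy ξ ψ η = Real.sqrt (Real.cos ψ) * (Real.exp (ξ/2)/2) * Real.cos ((ψ-3*η)/2) := by
  have h : (fun s => Phiy s ψ η)
      = fun s => Real.sqrt (Real.cos ψ) * Real.exp (s/2) * Real.cos ((ψ-3*η)/2) :=
    funext fun s => phiy_eq s ψ η
  have hd : HasDerivAt (fun s => Real.sqrt (Real.cos ψ) * Real.exp (s/2) * Real.cos ((ψ-3*η)/2))
      (Real.sqrt (Real.cos ψ) * (Real.exp (ξ/2) * (1/2)) * Real.cos ((ψ-3*η)/2)) ξ := by
    have := ((hd_half ξ).exp.const_mul (Real.sqrt (Real.cos ψ))).mul_const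
      (Real.cos ((ψ-3*η)/2))
    simpa [mul_comm, mul_assoc, mul_left_comm] using this
  rw [pXi, h, hd.deriv]; ring

lemma pXi_phit (ξ ψ η : ℝ) : pXi Phit ξ ψ η = -Real.exp ξ * Real.sin ψ := by
  have h : (fun s => Phit s ψ η) = fun s => -Real.exp s * Real.sin ψ := rfl
  have hd : HasDerivAt (fun s => -Real.exp s * Real.sin ψ) (-Real.exp ξ * Real.sin ψ) ξ := by
    have := ((Real.hasDerivAt_exp ξ).neg).mul_const (Real.sin ψ)
    norm_num at this ⊢; exact this
  rw [pXi, h, hd.deriv]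

lemma pEta_phix (ξ ψ η : ℝ) :
    pEta Phix ξ ψ η
      = Real.sqrt (Real.cos ψ) * Real.exp (ξ/2) * (Real.cos ((ψ-3*η)/2) * (3/2)) := by
  have h : (fun s => Phix ξ ψ s)
      = fun s => -(Real.sqrt (Real.cos ψ) * Real.exp (ξ/2) * Real.sin ((ψ-3*s)/2)) :=
    funext fun s => phix_eq ξ ψ s
  have hd : HasDerivAt (fun s => -(Real.sqrt (Real.cos ψ) * Real.exp (ξ/2) * Real.sin ((ψ-3*s)/2)))
      (-(Real.sqrt (Real.cos ψ) * Real.exp (ξ/2) * (Real.cos ((ψ-3*η)/2) * (-(3/2))))) η := by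
    have := (((hd_eta η ψ).sin).const_mul (Real.sqrt (Real.cos ψ) * Real.exp (ξ/2))).neg
    simpa [mul_comm, mul_assoc, mul_left_comm, Pi.neg_def] using this
  rw [pEta, h, hd.deriv]; ring

lemma pEta_phiy (ξ ψ η : ℝ) :
    pEta Phiy ξ ψ η
      = Real.sqrt (Real.cos ψ) * Real.exp (ξ/2) * (Real.sin ((ψ-3*η)/2) * (3/2)) := by
  have h : (fun s => Phiy ξ ψ s)
      = fun s => Real.sqrt (Real.cos ψ) * Real.exp (ξ/2) * Real.cos ((ψ-3*s)/2) :=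
    funext fun s => phiy_eq ξ ψ s
  have hd : HasDerivAt (fun s => Real.sqrt (Real.cos ψ) * Real.exp (ξ/2) * Real.cos ((ψ-3*s)/2))
      ((-Real.sin ((ψ-3*η)/2) * (-(3/2))) * (Real.sqrt (Real.cos ψ) * Real.exp (ξ/2))) η := by
    have := ((hd_eta η ψ).cos).const_mul (Real.sqrt (Real.cos ψ) * Real.exp (ξ/2))
    simpa [mul_comm, mul_assoc, mul_left_comm] using this
  rw [pEta, h, hd.deriv]; ring

lemma pEta_phit (ξ ψ η : ℝ) : pEta Phit ξ ψ η = 0 := by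
  have h : (fun s => Phit ξ ψ s) = fun _ => -Real.exp ξ * Real.sin ψ := rfl
  rw [pEta, h, deriv_const]

/-- The horizontal normal of σ_ψ and its norm. -/
theorem horizontal_normal_cone (ξ ψ η : ℝ) (hψ : ψ ∈ Set.Ioo (-(π / 2)) (π / 2)) :
    Nh1 ξ ψ η = -(3 / 2) * Real.exp (3 * ξ / 2) * Real.sqrt (Real.cos ψ) *
        Real.cos (3 * (η - ψ) / 2) ∧
    Nh2 ξ ψ η = (3 / 2) * Real.exp (3 * ξ / 2) * Real.sqrt (Real.cos ψ) *
        Real.sin (3 * (η - ψ) / 2) ∧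
    Real.sqrt (Nh1 ξ ψ η ^ 2 + Nh2 ξ ψ η ^ 2)
      = (3 / 2) * Real.exp (3 * ξ / 2) * Real.sqrt (Real.cos ψ) := by
  have hcos : 0 ≤ Real.cos ψ := (Real.cos_pos_of_mem_Ioo hψ).le
  have hsq : Real.sqrt (Real.cos ψ) ^ 2 = Real.cos ψ := Real.sq_sqrt hcos
  have hexp : Real.exp (ξ/2) * Real.exp ξ = Real.exp (3*ξ/2) := by
    rw [← Real.exp_add]; ring_nf
  have hexp3 : Real.exp (ξ/2) * Real.exp (ξ/2) * Real.exp (ξ/2) = Real.exp (3*ξ/2) := by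
    rw [← Real.exp_add, ← Real.exp_add]; ring_nf
  have hC : Real.cos (3 * (η - ψ) / 2)
      = Real.cos ψ * Real.cos ((ψ-3*η)/2) - Real.sin ψ * Real.sin ((ψ-3*η)/2) := by
    rw [show 3 * (η - ψ) / 2 = -(ψ + (ψ-3*η)/2) by ring, Real.cos_neg, Real.cos_add]
  have hS : Real.sin (3 * (η - ψ) / 2)
      = -(Real.sin ψ * Real.cos ((ψ-3*η)/2) + Real.cos ψ * Real.sin ((ψ-3*η)/2)) := by
    rw [show 3 * (η - ψ) / 2 = -(ψ + (ψ-3*η)/2) by ring, Real.sin_neg, Real.sin_add]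
  have h1 : Nh1 ξ ψ η = -(3 / 2) * Real.exp (3 * ξ / 2) * Real.sqrt (Real.cos ψ) *
      Real.cos (3 * (η - ψ) / 2) := by
    rw [Nh1, pXi_phix, pXi_phiy, pXi_phit, pEta_phix, pEta_phiy, pEta_phit, phiy_eq, hC]
    have P := Real.sin_sq_add_cos_sq ((ψ-3*η)/2)
    linear_combination
      (3/2) * Real.sqrt (Real.cos ψ) * Real.sin ψ * Real.sin ((ψ-3*η)/2) * hexp
      - (3/2) * Real.sqrt (Real.cos ψ)^3 * Real.cos ((ψ-3*η)/2) * Real.exp (ξ/2)^3 * P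
      - (3/2) * Real.sqrt (Real.cos ψ)^3 * Real.cos ((ψ-3*η)/2) * hexp3
      - (3/2) * Real.sqrt (Real.cos ψ) * Real.cos ((ψ-3*η)/2) * Real.exp (3*ξ/2) * hsq
  have h2 : Nh2 ξ ψ η = (3 / 2) * Real.exp (3 * ξ / 2) * Real.sqrt (Real.cos ψ) *
      Real.sin (3 * (η - ψ) / 2) := by
    rw [Nh2, pXi_phix, pXi_phiy, pXi_phit, pEta_phix, pEta_phiy, pEta_phit, phix_eq, hS]
    have P := Real.sin_sq_add_cos_sq ((ψ-3*η)/2)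
    linear_combination
      -(3/2) * Real.sqrt (Real.cos ψ) * Real.sin ψ * Real.cos ((ψ-3*η)/2) * hexp
      - (3/2) * Real.sqrt (Real.cos ψ)^3 * Real.sin ((ψ-3*η)/2) * Real.exp (ξ/2)^3 * P
      - (3/2) * Real.sqrt (Real.cos ψ)^3 * Real.sin ((ψ-3*η)/2) * hexp3
      - (3/2) * Real.sqrt (Real.cos ψ) * Real.sin ((ψ-3*η)/2) * Real.exp (3*ξ/2) * hsq
  refine ⟨h1, h2, ?_⟩
  rw [h1, h2]
  have hnn : 0 ≤ (3 / 2) * Real.exp (3 * ξ / 2) * Real.sqrt (Real.cos ψ) := by positivity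
  rw [show (-(3 / 2) * Real.exp (3 * ξ / 2) * Real.sqrt (Real.cos ψ) *
        Real.cos (3 * (η - ψ) / 2)) ^ 2 +
      ((3 / 2) * Real.exp (3 * ξ / 2) * Real.sqrt (Real.cos ψ) *
        Real.sin (3 * (η - ψ) / 2)) ^ 2
      = ((3 / 2) * Real.exp (3 * ξ / 2) * Real.sqrt (Real.cos ψ)) ^ 2 by
    have := Real.sin_sq_add_cos_sq (3 * (η - ψ) / 2); nlinarith]
  exact Real.sqrt_sq hnn
end
end
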